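/- arXiv:2203.02476 — 2 statements merged into one kernel-verified Lean document; each statement's English description precedes it below -/
import Mathlib

section
/- There exists a constant κ_d > 0, depending only on the dimension d ≥ 1, such that for every n ≥ 1 and every subset A ⊆ (ℤ/nℤ)^d ordered greedily as x_1, …, x_k (so that d(x_j, x_{j+1}) = min_{i>j} d(x_j, x_i) for each j), the product of the consecutive distances satisfies ∏_{j=1}^{k−1} d(x_j, x_{j+1}) ≤ κ_d^{n^d}. -/
/-!
For `m ≥ 0`, greediness gives `d(xⱼ, xᵢ) ≥ ℓⱼ` for `i > j`, so the points `xⱼ` with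
`ℓⱼ ≥ 2ᵐ⁺¹` are pairwise `2ᵐ⁺¹`-separated. The spheres of radii `s < 2ᵐ` about them are then
pairwise disjoint, and nonempty since the torus distance is geodesic; hence
`|{j : ℓⱼ ≥ 2ᵐ}| · 2ᵐ ≤ 2nᵈ` for every `m`. Summing dyadically,
`∑ⱼ (⌊log₂ ℓⱼ⌋ + 1) = ∑ₘ |{j : ℓⱼ ≥ 2ᵐ}| ≤ 4nᵈ`, so `∏ⱼ ℓⱼ ≤ 2^(4nᵈ) = 16^(nᵈ)`.
-/

open scoped BigOperators

/-- One step of movement on the torus `(ℤ/nℤ)^d`. -/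
def torusMove (d n : ℕ) (x : Fin d → ZMod n) (m : Fin d × Bool) : Fin d → ZMod n :=
  Function.update x m.1 (x m.1 + if m.2 then 1 else -1)

/-- Position after performing the list of moves `l` starting from `x`. -/
def posAfter (d n : ℕ) (x : Fin d → ZMod n) (l : List (Fin d × Bool)) : Fin d → ZMod n :=
  l.foldl (torusMove d n) x

/-- Graph distance on the torus `(ℤ/nℤ)^d`. -/
noncomputable def tdist (d n : ℕ) (x y : Fin d → ZMod n) : ℕ :=
  sInf {L : ℕ | ∃ l : List (Fin d × Bool), l.length = L ∧ posAfter d n x l = y}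

open Finset

section Dyadic

theorem sum_range_le_two_mul_of_mul_two_pow_le (a : ℕ → ℕ) (C : ℕ)
    (h : ∀ m, a m * 2 ^ m ≤ C) (M : ℕ) : ∑ m ∈ range M, a m ≤ 2 * C := by
  have hterm : ∀ m, (a m : ℝ) ≤ C * (1 / 2) ^ m := fun m => by
    rw [one_div_pow, ← div_eq_mul_one_div, le_div_iff₀ (by positivity)]
    exact_mod_cast h m
  have hsum : (∑ m ∈ range M, a m : ℝ) ≤ 2 * C :=
    calc (∑ m ∈ range M, a m : ℝ) ≤ ∑ m ∈ range M, C * (1 / 2 : ℝ) ^ m :=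
          sum_le_sum fun m _ => hterm m
      _ = C * ∑ m ∈ range M, (1 / 2 : ℝ) ^ m := (mul_sum _ _ _).symm
      _ ≤ C * 2 := by gcongr; exact sum_geometric_two_le M
      _ = 2 * C := mul_comm _ _
  exact_mod_cast hsum

theorem filter_range_two_pow_le_eq {ℓ M : ℕ} (hℓ : ℓ ≠ 0) (hM : ℓ < 2 ^ M) :
    {m ∈ range M | 2 ^ m ≤ ℓ} = range (Nat.log 2 ℓ + 1) := by
  have hlog : Nat.log 2 ℓ < M := Nat.log_lt_of_lt_pow hℓ hM
  ext m
  rw [mem_filter, mem_range, mem_range, Nat.lt_succ_iff, Nat.le_log_iff_pow_le one_lt_two hℓ]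
  exact ⟨And.right, fun hm => ⟨(Nat.le_log_of_pow_le one_lt_two hm).trans_lt hlog, hm⟩⟩

variable {ι : Type*} [Fintype ι]

theorem sum_log_succ_eq_sum_card_filter (ℓ : ι → ℕ) (hℓ : ∀ j, ℓ j ≠ 0) (M : ℕ)
    (hM : ∀ j, ℓ j < 2 ^ M) :
    ∑ j, (Nat.log 2 (ℓ j) + 1) = ∑ m ∈ range M, #{j | 2 ^ m ≤ ℓ j} := by
  calc ∑ j, (Nat.log 2 (ℓ j) + 1) = ∑ j, #{m ∈ range M | 2 ^ m ≤ ℓ j} := by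
        simp only [filter_range_two_pow_le_eq (hℓ _) (hM _), card_range]
    _ = ∑ j, ∑ m ∈ range M, if 2 ^ m ≤ ℓ j then 1 else 0 := by simp only [card_filter]
    _ = ∑ m ∈ range M, ∑ j, if 2 ^ m ≤ ℓ j then 1 else 0 := sum_comm
    _ = ∑ m ∈ range M, #{j | 2 ^ m ≤ ℓ j} := by simp only [card_filter]

theorem prod_le_two_pow_of_card_mul_two_pow_le (ℓ : ι → ℕ) (hℓ : ∀ j, ℓ j ≠ 0) (C : ℕ)
    (h : ∀ m, #{j | 2 ^ m ≤ ℓ j} * 2 ^ m ≤ C) : ∏ j, ℓ j ≤ 2 ^ (2 * C) := by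
  set M := univ.sup ℓ
  have hM : ∀ j, ℓ j < 2 ^ M := fun j =>
    (Nat.lt_two_pow_self).trans_le (Nat.pow_le_pow_right two_pos (le_sup (mem_univ j)))
  calc ∏ j, ℓ j ≤ ∏ j, 2 ^ (Nat.log 2 (ℓ j) + 1) :=
        prod_le_prod' fun j _ => (Nat.lt_pow_succ_log_self one_lt_two _).le
    _ = 2 ^ ∑ j, (Nat.log 2 (ℓ j) + 1) := prod_pow_eq_pow_sum _ _ _
    _ ≤ 2 ^ (2 * C) := by
        rw [sum_log_succ_eq_sum_card_filter ℓ hℓ M hM]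
        exact Nat.pow_le_pow_right two_pos (sum_range_le_two_mul_of_mul_two_pow_le _ C h M)

end Dyadic

section Packing

variable {α : Type*} {δ : α → α → ℕ}

theorem card_mul_le_card_of_separated [Fintype α] (hsymm : ∀ a b, δ a b = δ b a)
    (htri : ∀ a b c, δ a c ≤ δ a b + δ b c) (hgeod : ∀ a z s, s ≤ δ a z → ∃ y, δ a y = s)
    (S : Finset α) (R : ℕ) (hfar : ∀ a ∈ S, ∃ z, R ≤ δ a z)
    (hsep : ∀ a ∈ S, ∀ b ∈ S, a ≠ b → 2 * R ≤ δ a b) : #S * R ≤ Fintype.card α := by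
  have hsphere : ∀ a ∈ S, ∀ s < R, ∃ y, δ a y = s := fun a ha s hs =>
    let ⟨z, hz⟩ := hfar a ha
    hgeod a z s (hs.le.trans hz)
  choose! y hy using hsphere
  have hinj : Set.InjOn (fun p : α × ℕ => y p.1 p.2) (S ×ˢ range R : Finset (α × ℕ)) := by
    rintro ⟨a, s⟩ hp ⟨b, t⟩ hq (heq : y a s = y b t)
    simp only [coe_product, Set.mem_prod, mem_coe, mem_range] at hp hq
    by_cases hab : a = b
    · subst hab
      rw [← hy a hp.1 s hp.2, ← hy a hq.1 t hq.2, heq]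
    · have := (hsep a hp.1 b hq.1 hab).trans (htri a (y a s) b)
      rw [hy a hp.1 s hp.2, heq, hsymm, hy b hq.1 t hq.2] at this
      omega
  calc #S * R = #(S ×ˢ range R) := by rw [card_product, card_range]
    _ ≤ #(univ : Finset α) := card_le_card_of_injOn _ (fun _ _ => mem_coe.2 (mem_univ _)) hinj
    _ = Fintype.card α := card_univ

end Packing

section Greedy

variable {α : Type*} {k : ℕ}

/-- The paper's `ℓⱼ = δ(xⱼ, xⱼ₊₁)`; the last index gets the neutral value `1`. -/
def gap (δ : α → α → ℕ) (x : Fin k → α) (j : Fin k) : ℕ :=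
  if h : (j : ℕ) + 1 < k then δ (x j) (x ⟨j + 1, h⟩) else 1

def IsGreedyOrder (δ : α → α → ℕ) (x : Fin k → α) : Prop :=
  ∀ (j i : Fin k) (h : (j : ℕ) + 1 < k), j < i → δ (x j) (x ⟨j + 1, h⟩) ≤ δ (x j) (x i)

variable {δ : α → α → ℕ} {x : Fin k → α}

theorem gap_ne_zero (hδ : ∀ a b, δ a b = 0 → a = b) (hx : Function.Injective x) (j : Fin k) :
    gap δ x j ≠ 0 := by
  unfold gap
  split_ifs with h
  · exact fun h0 => by simpa [Fin.ext_iff] using hx (hδ _ _ h0)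
  · exact one_ne_zero

theorem lt_of_two_le_gap {j : Fin k} (h : 2 ≤ gap δ x j) : (j : ℕ) + 1 < k := by
  by_contra hj
  simp [gap, hj] at h

theorem gap_le_of_lt (hgreedy : IsGreedyOrder δ x) {j i : Fin k} (hji : j < i) :
    gap δ x j ≤ δ (x j) (x i) := by
  have hj : (j : ℕ) + 1 < k := by have := i.isLt; rw [Fin.lt_def] at hji; omega
  rw [gap, dif_pos hj]
  exact hgreedy j i hj hji

variable [Fintype α]

theorem card_two_pow_succ_le_gap_mul_le (hsymm : ∀ a b, δ a b = δ b a)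
    (htri : ∀ a b c, δ a c ≤ δ a b + δ b c) (hgeod : ∀ a z s, s ≤ δ a z → ∃ y, δ a y = s)
    (hx : Function.Injective x) (hgreedy : IsGreedyOrder δ x) (m : ℕ) :
    #{j | 2 ^ (m + 1) ≤ gap δ x j} * 2 ^ m ≤ Fintype.card α := by
  classical
  set J : Finset (Fin k) := {j | 2 ^ (m + 1) ≤ gap δ x j}
  have hJ : ∀ j ∈ J, 2 * 2 ^ m ≤ gap δ x j := fun j hj => by
    rw [← pow_succ']; exact (mem_filter.1 hj).2
  have hfar : ∀ a ∈ J.image x, ∃ z, 2 ^ m ≤ δ a z := by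
    simp only [mem_image]
    rintro _ ⟨j, hj, rfl⟩
    have hgap := hJ j hj
    have hjk : (j : ℕ) + 1 < k :=
      lt_of_two_le_gap (le_trans (by simpa using Nat.one_le_two_pow) hgap)
    have hnext := gap_le_of_lt hgreedy (i := ⟨j + 1, hjk⟩) (Fin.lt_def.2 (Nat.lt_add_one _))
    exact ⟨x ⟨j + 1, hjk⟩, by omega⟩
  have hsep : ∀ a ∈ J.image x, ∀ b ∈ J.image x, a ≠ b → 2 * 2 ^ m ≤ δ a b := by
    simp only [mem_image]
    rintro _ ⟨j, hj, rfl⟩ _ ⟨i, hi, rfl⟩ hne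
    rcases lt_or_gt_of_ne (ne_of_apply_ne x hne) with hji | hij
    · exact (hJ j hj).trans (gap_le_of_lt hgreedy hji)
    · exact hsymm (x j) (x i) ▸ (hJ i hi).trans (gap_le_of_lt hgreedy hij)
  simpa only [card_image_of_injective _ hx] using
    card_mul_le_card_of_separated hsymm htri hgeod (J.image x) (2 ^ m) hfar hsep

theorem prod_gap_le_sixteen_pow (hsymm : ∀ a b, δ a b = δ b a)
    (htri : ∀ a b c, δ a c ≤ δ a b + δ b c) (hgeod : ∀ a z s, s ≤ δ a z → ∃ y, δ a y = s)
    (hδ : ∀ a b, δ a b = 0 → a = b) (hx : Function.Injective x) (hgreedy : IsGreedyOrder δ x) :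
    ∏ j, gap δ x j ≤ 16 ^ Fintype.card α := by
  have hcount : ∀ m, #{j | 2 ^ m ≤ gap δ x j} * 2 ^ m ≤ 2 * Fintype.card α := by
    rintro (_ | m)
    · have hk : k ≤ Fintype.card α := by simpa using Fintype.card_le_of_injective x hx
      have := card_le_univ (α := Fin k) {j | 2 ^ 0 ≤ gap δ x j}
      rw [Fintype.card_fin] at this
      omega
    · have := card_two_pow_succ_le_gap_mul_le hsymm htri hgeod hx hgreedy m
      rw [pow_succ, ← mul_assoc, mul_comm 2]
      exact Nat.mul_le_mul_right 2 this
  calc ∏ j, gap δ x j ≤ 2 ^ (2 * (2 * Fintype.card α)) :=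
        prod_le_two_pow_of_card_mul_two_pow_le _ (gap_ne_zero hδ hx) _ hcount
    _ = 16 ^ Fintype.card α := by rw [← mul_assoc, pow_mul]; norm_num

end Greedy

section Torus

variable {d n : ℕ}

theorem posAfter_append (x : Fin d → ZMod n) (l₁ l₂ : List (Fin d × Bool)) :
    posAfter d n x (l₁ ++ l₂) = posAfter d n (posAfter d n x l₁) l₂ :=
  List.foldl_append

theorem posAfter_replicate (x : Fin d → ZMod n) (i : Fin d) (m : ℕ) :
    posAfter d n x (List.replicate m (i, true)) = Function.update x i (x i + m) := by
  induction m generalizing x with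
  | zero => simp [posAfter]
  | succ m ih =>
    rw [List.replicate_succ]
    change posAfter d n (torusMove d n x (i, true)) _ = _
    rw [ih]
    funext j
    rcases eq_or_ne j i with rfl | h
    · simp only [torusMove, Function.update_self, if_true, Nat.cast_succ]
      ring
    · simp [torusMove, Function.update_of_ne h]

theorem torusMove_torusMove_not (x : Fin d → ZMod n) (m : Fin d × Bool) :
    torusMove d n (torusMove d n x m) (m.1, !m.2) = x := by
  obtain ⟨i, b⟩ := m
  funext j
  rcases eq_or_ne j i with rfl | h
  · cases b <;> simp [torusMove]
  · simp [torusMove, Function.update_of_ne h]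

theorem posAfter_posAfter_reverse (x : Fin d → ZMod n) (l : List (Fin d × Bool)) :
    posAfter d n (posAfter d n x l) (l.reverse.map fun m => (m.1, !m.2)) = x := by
  induction l generalizing x with
  | nil => rfl
  | cons m l ih =>
    change posAfter d n (posAfter d n (torusMove d n x m) l) _ = x
    rw [List.reverse_cons, List.map_append, posAfter_append, ih]
    exact torusMove_torusMove_not x m

theorem exists_posAfter_eq [NeZero n] (x y : Fin d → ZMod n) :
    ∃ l, posAfter d n x l = y := by
  classical
  suffices ∀ s : Finset (Fin d), ∃ l, posAfter d n x l = fun i => if i ∈ s then y i else x i by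
    simpa using this univ
  intro s
  induction s using Finset.induction with
  | empty => exact ⟨[], by simp [posAfter]⟩
  | insert a s ha ih =>
    obtain ⟨l, hl⟩ := ih
    refine ⟨l ++ List.replicate (y a - x a).val (a, true), ?_⟩
    rw [posAfter_append, hl, posAfter_replicate]
    funext i
    rcases eq_or_ne i a with rfl | h
    · simp [ha]
    · simp [h]

theorem tdist_le_length {x y : Fin d → ZMod n} {l : List (Fin d × Bool)}
    (h : posAfter d n x l = y) : tdist d n x y ≤ l.length :=
  Nat.sInf_le ⟨l, rfl, h⟩

theorem exists_length_eq_tdist [NeZero n] (x y : Fin d → ZMod n) :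
    ∃ l : List (Fin d × Bool), l.length = tdist d n x y ∧ posAfter d n x l = y :=
  let ⟨l, hl⟩ := exists_posAfter_eq x y
  Nat.sInf_mem (s := {L | ∃ l : List (Fin d × Bool), l.length = L ∧ posAfter d n x l = y})
    ⟨l.length, l, rfl, hl⟩

variable [NeZero n]

theorem tdist_comm (x y : Fin d → ZMod n) : tdist d n x y = tdist d n y x := by
  have key : ∀ a b : Fin d → ZMod n, tdist d n b a ≤ tdist d n a b := fun a b => by
    obtain ⟨l, hl, rfl⟩ := exists_length_eq_tdist a b
    simpa [hl] using tdist_le_length (posAfter_posAfter_reverse a l)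
  exact le_antisymm (key y x) (key x y)

theorem tdist_triangle (x y z : Fin d → ZMod n) :
    tdist d n x z ≤ tdist d n x y + tdist d n y z := by
  obtain ⟨l₁, h₁, rfl⟩ := exists_length_eq_tdist x y
  obtain ⟨l₂, h₂, rfl⟩ := exists_length_eq_tdist (posAfter d n x l₁) z
  simpa [h₁, h₂] using tdist_le_length (posAfter_append x l₁ l₂)

theorem eq_of_tdist_eq_zero {x y : Fin d → ZMod n} (h : tdist d n x y = 0) : x = y := by
  obtain ⟨l, hl, rfl⟩ := exists_length_eq_tdist x y
  rw [h, List.length_eq_zero_iff] at hl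
  subst hl
  rfl

theorem exists_tdist_eq (x z : Fin d → ZMod n) (s : ℕ) (hs : s ≤ tdist d n x z) :
    ∃ y, tdist d n x y = s := by
  obtain ⟨l, hl, hz⟩ := exists_length_eq_tdist x z
  refine ⟨posAfter d n x (l.take s), le_antisymm ?_ ?_⟩
  · exact (tdist_le_length rfl).trans (List.length_take_le _ _)
  · -- The rest of a geodesic from the point reached after `s` steps still has to reach `z`.
    have hrest : tdist d n (posAfter d n x (l.take s)) z ≤ tdist d n x z - s := by
      have := tdist_le_length (l := l.drop s)
        (by rw [← posAfter_append, List.take_append_drop, hz])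
      rwa [List.length_drop, hl] at this
    have := tdist_triangle x (posAfter d n x (l.take s)) z
    omega

end Torus

theorem stmt3_general (d : ℕ) :
    ∃ κ : ℝ, 0 < κ ∧ ∀ n : ℕ, 1 ≤ n → ∀ (k : ℕ) (x : Fin k → Fin d → ZMod n),
      Function.Injective x →
      (∀ (j i : Fin k) (h : (j : ℕ) + 1 < k), j < i →
        tdist d n (x j) (x ⟨(j : ℕ) + 1, h⟩) ≤ tdist d n (x j) (x i)) →
      (∏ j : Fin k, if h : (j : ℕ) + 1 < k
          then (tdist d n (x j) (x ⟨(j : ℕ) + 1, h⟩) : ℝ) else 1)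
        ≤ κ ^ (n ^ d) := by
  refine ⟨16, by norm_num, fun n hn k x hx hgreedy => ?_⟩
  have : NeZero n := ⟨by omega⟩
  have key := prod_gap_le_sixteen_pow tdist_comm tdist_triangle exists_tdist_eq
    (fun _ _ => eq_of_tdist_eq_zero) hx hgreedy
  rw [Fintype.card_fun, ZMod.card, Fintype.card_fin] at key
  calc (∏ j : Fin k, if h : (j : ℕ) + 1 < k
          then (tdist d n (x j) (x ⟨(j : ℕ) + 1, h⟩) : ℝ) else 1)
      = ((∏ j, gap (tdist d n) x j : ℕ) : ℝ) := by
        push_cast [gap, apply_dite (Nat.cast : ℕ → ℝ)]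
        rfl
    _ ≤ 16 ^ n ^ d := by exact_mod_cast key

/-- There exists a constant `κ_d > 0`, depending only on the dimension `d ≥ 1`, such
that for every `n ≥ 1` and every subset of `(ℤ/nℤ)^d` ordered greedily as
`x_1, …, x_k`, the product of the consecutive distances `∏_j d(x_j, x_{j+1})`
is at most `κ_d^{n^d}`. -/
theorem stmt3 (d : ℕ) (hd : 1 ≤ d) :
    ∃ κ : ℝ, 0 < κ ∧ ∀ n : ℕ, 1 ≤ n → ∀ (k : ℕ) (x : Fin k → Fin d → ZMod n),
      Function.Injective x →
      (∀ (j i : Fin k) (h : (j : ℕ) + 1 < k), j < i →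
        tdist d n (x j) (x ⟨(j : ℕ) + 1, h⟩) ≤ tdist d n (x j) (x i)) →
      (∏ j : Fin k, if h : (j : ℕ) + 1 < k
          then (tdist d n (x j) (x ⟨(j : ℕ) + 1, h⟩) : ℝ) else 1)
        ≤ κ ^ (n ^ d) :=
  stmt3_general d
end

section
/- Let p ∈ (0,1) and consider the one-dimensional birth-and-death chain on {1,…,k+1} where from each state j ≤ k the chain moves to j+1 with probability p and the hitting time T_{k+1} of k+1 is considered. If at every state j the probability of moving up is exactly p = λ/(1+λ) and, for each 2 ≤ j ≤ k, the probability of moving down is at least 1/((1+λ)·2d·ℓ_{j−1}) where ℓ_1,…,ℓ_{k−1} are positive integers with ∏_j ℓ_j ≤ K^{n^d} and k = ⌈μn^d⌉, then for every M ∈ ℕ, P_1(T_{k+1} ≤ M) ≤ (M/(1∧(2dλ))) · (K·(2dλ)^μ)^{n^d}. -/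
open scoped BigOperators

/-- The probability, for the Markov chain with transition matrix `p` started at `a`,
that the first hitting time of `b` is at most `M`. -/
def hitProb {S : Type*} [Fintype S] [DecidableEq S] (p : S → S → ℝ) (a b : S)
    (M : ℕ) : ℝ :=
  ∑ f : Fin (M + 1) → S,
    if f 0 = a ∧ ∃ t : Fin (M + 1), 1 ≤ (t : ℕ) ∧ f t = b then
      ∏ i : Fin M, p (f i.castSucc) (f i.succ)
    else 0

/-!
The chain is reversible with respect to `ν j = ∏_{i < j} p(i, i+1) / p(i+1, i)`, so
`ν 1 · Pᵗ(1, k+1) = ν (k+1) · Pᵗ(k+1, 1) ≤ ν (k+1)`, and a union bound over the first `M`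
steps gives `P₁(T_{k+1} ≤ M) ≤ M · ν (k+1)`. Each ratio `p(j, j+1) / p(j+1, j)` is at most
`2dλ ℓ_j`, except the last one, which is `1`; hence `ν (k+1) ≤ (2dλ)^(k-1) K^(n^d)`, and
`(2dλ)^(k-1) ≤ (2dλ)^(μ n^d) / (1 ∧ 2dλ)` because `μ n^d ≤ k < μ n^d + 1`.
-/

open Finset Matrix

section PathSums

variable {S : Type*} (p : S → S → ℝ)

def pathWeight {m : ℕ} (f : Fin (m + 1) → S) : ℝ :=
  ∏ i : Fin m, p (f i.castSucc) (f i.succ)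

lemma pathWeight_cons {m : ℕ} (x : S) (f : Fin (m + 1) → S) :
    pathWeight p (Fin.cons x f : Fin (m + 2) → S) = p x (f 0) * pathWeight p f := by
  simp only [pathWeight, Fin.prod_univ_succ, Fin.castSucc_zero, Fin.cons_zero, Fin.cons_succ]
  rfl

variable [Fintype S] [DecidableEq S]

/-- `pathExpect p m a φ` is `E_a[φ(X₀, …, X_m)]`. -/
def pathExpect (m : ℕ) (a : S) (φ : (Fin (m + 1) → S) → ℝ) : ℝ :=
  ∑ f : Fin (m + 1) → S, if f 0 = a then pathWeight p f * φ f else 0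

variable {p}

lemma pathExpect_congr {m : ℕ} {a : S} {φ ψ : (Fin (m + 1) → S) → ℝ}
    (h : ∀ f, f 0 = a → φ f = ψ f) : pathExpect p m a φ = pathExpect p m a ψ :=
  sum_congr rfl fun f _ => by by_cases hf : f 0 = a <;> simp [hf, h]

lemma pathExpect_succ (m : ℕ) (a : S) (φ : (Fin (m + 2) → S) → ℝ) :
    pathExpect p (m + 1) a φ = ∑ y, p a y * pathExpect p m y (fun f => φ (Fin.cons a f)) := by
  calc pathExpect p (m + 1) a φ
      = ∑ f : Fin (m + 1) → S, p a (f 0) * pathWeight p f * φ (Fin.cons a f) := by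
        rw [pathExpect, ← (Fin.consEquiv fun _ => S).sum_comp, Fintype.sum_prod_type,
          sum_eq_single a]
        · simp [Fin.consEquiv, pathWeight_cons]
        · intro x _ hx
          simp [Fin.consEquiv, hx]
        · simp
    _ = ∑ y, p a y * pathExpect p m y (fun f => φ (Fin.cons a f)) := by
        simp only [pathExpect, mul_sum, mul_ite, mul_zero]
        rw [sum_comm]
        refine sum_congr rfl fun f _ => ?_
        rw [sum_ite_eq]
        simp [mul_assoc]

lemma pathExpect_one (hP : of p ∈ rowStochastic ℝ S) (m : ℕ) (a : S) :
    pathExpect p m a 1 = 1 := by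
  induction m generalizing a with
  | zero =>
    simp [pathExpect, pathWeight, ← (Equiv.funUnique (Fin 1) S).symm.sum_comp]
  | succ m ih =>
    rw [pathExpect_succ]
    simp only [Pi.one_apply, ← Pi.one_def, ih, mul_one]
    exact sum_row_of_mem_rowStochastic hP a

lemma hitProb_eq_pathExpect (a b : S) (M : ℕ) :
    hitProb p a b M = pathExpect p M a
      (fun f => if ∃ t : Fin (M + 1), 1 ≤ (t : ℕ) ∧ f t = b then 1 else 0) := by
  refine sum_congr rfl fun f _ => ?_
  simp only [ite_and, mul_ite, mul_one, mul_zero, pathWeight]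

lemma hitProb_zero (a b : S) : hitProb p a b 0 = 0 := by
  simp [hitProb]

lemma hitProb_succ (hP : of p ∈ rowStochastic ℝ S) (m : ℕ) (a b : S) :
    hitProb p a b (m + 1) = ∑ y, p a y * if y = b then 1 else hitProb p y b m := by
  have hit_cons : ∀ f : Fin (m + 1) → S,
      (∃ t : Fin (m + 2), 1 ≤ (t : ℕ) ∧ (Fin.cons a f : Fin (m + 2) → S) t = b) ↔
        ∃ s, f s = b := by
    intro f
    simp [Fin.exists_fin_succ]
  rw [hitProb_eq_pathExpect, pathExpect_succ]
  refine sum_congr rfl fun y _ => congrArg _ ?_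
  split_ifs with hy
  · exact (pathExpect_congr fun f hf => if_pos ((hit_cons f).2 ⟨0, hf.trans hy⟩)).trans
      (pathExpect_one hP m y)
  · rw [hitProb_eq_pathExpect]
    refine pathExpect_congr fun f hf => ?_
    simp [hit_cons, Fin.exists_fin_succ, hf, hy]

lemma hitProb_le_sum_pow (hP : of p ∈ rowStochastic ℝ S) (b : S) (M : ℕ) (a : S) :
    hitProb p a b M ≤ ∑ t ∈ range M, (of p ^ (t + 1)) a b := by
  induction M generalizing a with
  | zero => simp [hitProb_zero]
  | succ M ih =>
    have hit_le : ∀ y, (if y = b then 1 else hitProb p y b M) ≤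
        (if y = b then 1 else 0) + ∑ t ∈ range M, (of p ^ (t + 1)) y b := by
      intro y
      have : 0 ≤ ∑ t ∈ range M, (of p ^ (t + 1)) y b :=
        sum_nonneg fun t _ => nonneg_of_mem_rowStochastic (pow_mem hP _)
      split_ifs
      · linarith
      · simpa using ih y
    calc hitProb p a b (M + 1)
        ≤ ∑ y, p a y * ((if y = b then 1 else 0) + ∑ t ∈ range M, (of p ^ (t + 1)) y b) := by
          rw [hitProb_succ hP]
          gcongr with y
          exacts [nonneg_of_mem_rowStochastic hP, hit_le y]
      _ = ∑ t ∈ range (M + 1), (of p ^ (t + 1)) a b := by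
          simp only [mul_add, sum_add_distrib, mul_ite, mul_one, mul_zero, sum_ite_eq', mem_univ,
            if_true, sum_range_succ', pow_succ' (of p), mul_apply, of_apply, mul_sum]
          rw [sum_comm, add_comm]
          simp [one_apply]

end PathSums

def DetailedBalance {n R : Type*} [Mul R] (ν : n → R) (P : Matrix n n R) : Prop :=
  ∀ a b, ν a * P a b = ν b * P b a

lemma DetailedBalance.pow {n R : Type*} [Fintype n] [DecidableEq n] [CommSemiring R]
    {ν : n → R} {P : Matrix n n R} (h : DetailedBalance ν P) (t : ℕ) :
    DetailedBalance ν (P ^ t) := by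
  -- detailed balance says exactly that `diagonal ν * P = Pᵀ * diagonal ν`
  have hsemiconj : SemiconjBy (diagonal ν) P Pᵀ := by
    ext a b
    simp [diagonal_mul, mul_diagonal, h a b, mul_comm]
  intro a b
  simpa [diagonal_mul, mul_diagonal, ← transpose_pow, mul_comm] using
    congrFun₂ (hsemiconj.pow_right t).eq a b

lemma hitProb_le_of_detailedBalance {S : Type*} [Fintype S] [DecidableEq S] {p : S → S → ℝ}
    (hP : of p ∈ rowStochastic ℝ S) (ν : S → ℝ) (hν : ∀ a, 0 < ν a)
    (hdb : DetailedBalance ν (of p)) (a b : S) (M : ℕ) :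
    hitProb p a b M ≤ M * (ν b / ν a) := by
  have pow_le : ∀ t, (of p ^ t) a b ≤ ν b / ν a := fun t => by
    rw [le_div_iff₀' (hν a), hdb.pow t a b]
    exact mul_le_of_le_one_right (hν b).le (le_one_of_mem_rowStochastic (pow_mem hP t))
  calc hitProb p a b M ≤ ∑ t ∈ range M, (of p ^ (t + 1)) a b := hitProb_le_sum_pow hP b M a
    _ ≤ ∑ t ∈ range M, ν b / ν a := sum_le_sum fun t _ => pow_le (t + 1)
    _ = M * (ν b / ν a) := by simp

namespace Fin

lemma partialProd_last {M : Type*} [CommMonoid M] {n : ℕ} (f : Fin n → M) :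
    partialProd f (last n) = ∏ i, f i := by
  rw [partialProd, val_last, List.take_of_length_le (by simp), List.prod_ofFn]

lemma partialProd_pos {R : Type*} [CommMonoidWithZero R] [PartialOrder R] [ZeroLEOneClass R]
    [PosMulStrictMono R] [Nontrivial R] {n : ℕ} {f : Fin n → R} (hf : ∀ i, 0 < f i)
    (j : Fin (n + 1)) : 0 < partialProd f j :=
  j.induction (by simp) fun i hi => by rw [partialProd_succ]; exact mul_pos hi (hf i)

lemma prod_le_pow_mul_prod_Icc {k : ℕ} {r : Fin k → ℝ} {c : ℝ} {ℓ : ℕ → ℝ}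
    (hr0 : ∀ i, 0 ≤ r i) (hr : ∀ i : Fin k, (i : ℕ) + 1 ≤ k - 1 → r i ≤ c * ℓ (i + 1))
    (hlast : ∀ i : Fin k, (i : ℕ) = k - 1 → r i = 1) :
    ∏ i, r i ≤ c ^ (k - 1) * ∏ j ∈ Icc 1 (k - 1), ℓ j := by
  cases k with
  | zero => simp
  | succ k =>
    rw [Fin.prod_univ_castSucc, hlast (Fin.last k) (by simp), mul_one, Nat.add_sub_cancel]
    calc ∏ i : Fin k, r i.castSucc ≤ ∏ i : Fin k, c * ℓ (i + 1) :=
          prod_le_prod (fun i _ => hr0 _) fun i _ => hr _ (by simp)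
      _ = c ^ k * ∏ j ∈ Icc 1 k, ℓ j := by
          rw [prod_mul_distrib, prod_const, Fin.prod_univ_eq_prod_range (fun i => ℓ (i + 1)),
            ← Finset.Ico_add_one_right_eq_Icc, prod_Ico_eq_prod_range]
          simp [add_comm]

end Fin

lemma pow_ceil_sub_one_le_rpow_div_min {x y : ℝ} (hx : 0 < x) (hy : 0 ≤ y) :
    x ^ (⌈y⌉₊ - 1) ≤ x ^ y / min 1 x := by
  rw [le_div_iff₀ (lt_min one_pos hx)]
  rcases le_or_gt 1 x with h | h
  · have hexp : ((⌈y⌉₊ - 1 : ℕ) : ℝ) ≤ y := by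
      rcases Nat.eq_zero_or_pos ⌈y⌉₊ with h0 | h0
      · simpa [h0] using hy
      · exact (Nat.lt_ceil.1 (Nat.sub_lt h0 one_pos)).le
    rw [min_eq_left h, mul_one, ← Real.rpow_natCast]
    exact Real.rpow_le_rpow_of_exponent_le h hexp
  · rw [min_eq_right h.le, ← pow_succ]
    calc x ^ (⌈y⌉₊ - 1 + 1) ≤ x ^ ⌈y⌉₊ := pow_le_pow_of_le_one hx.le h.le (by omega)
      _ = x ^ (⌈y⌉₊ : ℝ) := (Real.rpow_natCast x _).symm
      _ ≤ x ^ y := Real.rpow_le_rpow_of_exponent_ge hx h.le (Nat.le_ceil y)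

section BirthDeath

variable {k : ℕ} (p : Fin (k + 1) → Fin (k + 1) → ℝ)

noncomputable def birthDeathRatio (i : Fin k) : ℝ := p i.castSucc i.succ / p i.succ i.castSucc

variable {p}

lemma detailedBalance_partialProd_birthDeathRatio
    (hbd : ∀ i j : Fin (k + 1), (i : ℕ) ≠ j → (i : ℕ) + 1 ≠ j → (j : ℕ) + 1 ≠ i → p i j = 0)
    (hdown : ∀ i : Fin k, p i.succ i.castSucc ≠ 0) :
    DetailedBalance (Fin.partialProd (birthDeathRatio p)) (of p) := by
  intro a b
  simp only [of_apply]
  wlog hab : a ≤ b generalizing a b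
  · exact (this b a (le_of_not_ge hab)).symm
  rw [Fin.le_iff_val_le_val] at hab
  by_cases hsucc : (a : ℕ) + 1 = b
  · obtain ⟨i, rfl, rfl⟩ : ∃ i : Fin k, a = i.castSucc ∧ b = i.succ :=
      ⟨⟨a, by omega⟩, rfl, Fin.ext hsucc.symm⟩
    rw [Fin.partialProd_succ, birthDeathRatio, mul_assoc, div_mul_cancel₀ _ (hdown i)]
  · obtain rfl | hne := eq_or_ne a b
    · rfl
    · have hne' : (a : ℕ) ≠ b := Fin.val_ne_of_ne hne
      rw [hbd a b hne' hsucc (by omega), hbd b a hne'.symm (by omega) hsucc, mul_zero, mul_zero]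

lemma hitProb_last_le_prod_birthDeathRatio (hP : of p ∈ rowStochastic ℝ (Fin (k + 1)))
    (hbd : ∀ i j : Fin (k + 1), (i : ℕ) ≠ j → (i : ℕ) + 1 ≠ j → (j : ℕ) + 1 ≠ i → p i j = 0)
    (hup : ∀ i : Fin k, 0 < p i.castSucc i.succ) (hdown : ∀ i : Fin k, 0 < p i.succ i.castSucc)
    (M : ℕ) : hitProb p 0 (Fin.last k) M ≤ M * ∏ i, birthDeathRatio p i := by
  simpa only [Fin.val_zero, Fin.partialProd_zero, Fin.partialProd_last, div_one] using
    hitProb_le_of_detailedBalance hP (Fin.partialProd (birthDeathRatio p))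
      (Fin.partialProd_pos fun i => div_pos (hup i) (hdown i))
      (detailedBalance_partialProd_birthDeathRatio hbd fun i => (hdown i).ne') 0 (Fin.last k) M

lemma birthDeathRatio_le {lam c : ℝ} (hlam : 0 < lam) (hc : 0 < c) (i : Fin k)
    (hup : p i.castSucc i.succ = lam / (1 + lam))
    (hdown : 1 / ((1 + lam) * c) ≤ p i.succ i.castSucc) :
    birthDeathRatio p i ≤ c * lam := by
  have hdown_pos : 0 < p i.succ i.castSucc := lt_of_lt_of_le (by positivity) hdown
  rw [birthDeathRatio, hup, div_le_iff₀ hdown_pos]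
  calc lam / (1 + lam) = c * lam * (1 / ((1 + lam) * c)) := by field_simp
    _ ≤ c * lam * p i.succ i.castSucc := by gcongr

section DriftBounds

variable {lam c : ℝ} {ℓ : ℕ → ℝ} (hlam : 0 < lam) (hc : 0 < c) (hℓ : ∀ j, 0 < ℓ j)
  (hdown : ∀ i : Fin k, (i : ℕ) + 1 ≤ k - 1 →
    1 / ((1 + lam) * c * ℓ ((i : ℕ) + 1)) ≤ p i.succ i.castSucc)
  (htop : ∀ i : Fin k, (i : ℕ) = k - 1 → p i.succ i.castSucc = lam / (1 + lam))
include hlam hc hℓ hdown htop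

lemma birthDeath_down_pos (i : Fin k) : 0 < p i.succ i.castSucc := by
  rcases eq_or_ne (i : ℕ) (k - 1) with hi | hi
  · rw [htop i hi]; positivity
  · exact lt_of_lt_of_le (by have := hℓ (i + 1); positivity) (hdown i (by omega))

lemma prod_birthDeathRatio_le (hup : ∀ i : Fin k, p i.castSucc i.succ = lam / (1 + lam)) :
    ∏ i, birthDeathRatio p i ≤ (c * lam) ^ (k - 1) * ∏ j ∈ Icc 1 (k - 1), ℓ j := by
  refine Fin.prod_le_pow_mul_prod_Icc
    (fun i => (div_pos (by rw [hup]; positivity)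
      (birthDeath_down_pos hlam hc hℓ hdown htop i)).le)
    (fun i hi => ?_) (fun i hi => ?_)
  · refine (birthDeathRatio_le hlam (mul_pos hc (hℓ _)) i (hup i) ?_).trans_eq
      (mul_right_comm _ _ _)
    rw [← mul_assoc]
    exact hdown i hi
  · rw [birthDeathRatio, htop i hi, hup, div_self (by positivity)]

end DriftBounds

end BirthDeath

theorem stmt17_general (d n : ℕ) (hd : 1 ≤ d) (lam mu K : ℝ)
    (hlam : 0 < lam) (hmu0 : 0 < mu) (hK : 0 < K)
    (k : ℕ) (hk : k = ⌈mu * (n : ℝ) ^ d⌉₊)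
    (ell : ℕ → ℕ) (hell : ∀ j, 1 ≤ ell j)
    (hprod : (∏ j ∈ Finset.Icc 1 (k - 1), (ell j : ℝ)) ≤ K ^ (n ^ d))
    (p : Fin (k + 1) → Fin (k + 1) → ℝ)
    (hp : ∀ i j, 0 ≤ p i j) (hst : ∀ i, ∑ j, p i j = 1)
    (hbd : ∀ i j : Fin (k + 1), (i : ℕ) ≠ j → (i : ℕ) + 1 ≠ j → (j : ℕ) + 1 ≠ i →
      p i j = 0)
    (hup : ∀ i : Fin k, p i.castSucc i.succ = lam / (1 + lam))
    (hdown : ∀ i : Fin k, (i : ℕ) + 1 ≤ k - 1 →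
      1 / ((1 + lam) * (2 * d) * (ell ((i : ℕ) + 1))) ≤ p i.succ i.castSucc)
    (htop : ∀ i : Fin k, (i : ℕ) = k - 1 → p i.succ i.castSucc = lam / (1 + lam))
    (M : ℕ) :
    hitProb p 0 (Fin.last k) M
      ≤ ((M : ℝ) / min 1 (2 * d * lam)) * (K * (2 * (d : ℝ) * lam) ^ mu) ^ (n ^ d) := by
  have hd' : (0 : ℝ) < d := by exact_mod_cast hd
  have hell' : ∀ j, (0 : ℝ) < ell j := fun j => by exact_mod_cast hell j
  set x := 2 * (d : ℝ) * lam
  have hx : 0 < x := by positivity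
  have hup_pos : ∀ i : Fin k, 0 < p i.castSucc i.succ := fun i => by rw [hup]; positivity
  have hc : (0 : ℝ) < 2 * d := by positivity
  calc hitProb p 0 (Fin.last k) M ≤ M * ∏ i, birthDeathRatio p i :=
        hitProb_last_le_prod_birthDeathRatio (mem_rowStochastic_iff_sum.2 ⟨hp, hst⟩) hbd hup_pos
          (birthDeath_down_pos hlam hc hell' hdown htop) M
    _ ≤ M * (x ^ (k - 1) * K ^ (n ^ d)) := by
        gcongr
        exact (prod_birthDeathRatio_le hlam hc hell' hdown htop hup).trans (by gcongr)
    _ ≤ M * (x ^ (mu * (n : ℝ) ^ d) / min 1 x * K ^ (n ^ d)) := by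
        gcongr
        exact hk ▸ pow_ceil_sub_one_le_rpow_div_min hx (by positivity)
    _ = M / min 1 x * (K * x ^ mu) ^ (n ^ d) := by
        rw [mul_pow, ← Real.rpow_natCast (x ^ mu), ← Real.rpow_mul hx.le, Nat.cast_pow]
        ring

/-- For the birth-and-death chain on `{1, …, k+1}` (encoded as `Fin (k+1)`, index `i`
being state `i+1`) with `k = ⌈μn^d⌉`, upward probabilities exactly `λ/(1+λ)` and
downward probabilities at least `1/((1+λ)·2d·ℓ_{j−1})`, where
`∏_{j=1}^{k−1} ℓ_j ≤ K^{n^d}`, the hitting time of `k+1` from `1` satisfies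
`P_1(T_{k+1} ≤ M) ≤ (M/(1 ∧ 2dλ)) · (K·(2dλ)^μ)^{n^d}`. -/
theorem stmt17 (d n : ℕ) (hd : 1 ≤ d) (hn : 1 ≤ n) (lam mu K : ℝ)
    (hlam : 0 < lam) (hmu0 : 0 < mu) (hmu1 : mu < 1) (hK : 0 < K)
    (k : ℕ) (hk : k = ⌈mu * (n : ℝ) ^ d⌉₊)
    (ell : ℕ → ℕ) (hell : ∀ j, 1 ≤ ell j)
    (hprod : (∏ j ∈ Finset.Icc 1 (k - 1), (ell j : ℝ)) ≤ K ^ (n ^ d))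
    (p : Fin (k + 1) → Fin (k + 1) → ℝ)
    (hp : ∀ i j, 0 ≤ p i j) (hst : ∀ i, ∑ j, p i j = 1)
    (hbd : ∀ i j : Fin (k + 1), (i : ℕ) ≠ j → (i : ℕ) + 1 ≠ j → (j : ℕ) + 1 ≠ i →
      p i j = 0)
    (hup : ∀ i : Fin k, p i.castSucc i.succ = lam / (1 + lam))
    (hdown : ∀ i : Fin k, (i : ℕ) + 1 ≤ k - 1 →
      1 / ((1 + lam) * (2 * d) * (ell ((i : ℕ) + 1))) ≤ p i.succ i.castSucc)
    (htop : ∀ i : Fin k, (i : ℕ) = k - 1 → p i.succ i.castSucc = lam / (1 + lam))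
    (M : ℕ) :
    hitProb p 0 (Fin.last k) M
      ≤ ((M : ℝ) / min 1 (2 * d * lam)) * (K * (2 * (d : ℝ) * lam) ^ mu) ^ (n ^ d) :=
  stmt17_general d n hd lam mu K hlam hmu0 hK k hk ell hell hprod p hp hst hbd hup hdown htop M
end
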